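/- Let m ≥ 1 and let (Γ, τ) be a stable translation quiver. Then (Γ^m, τ^m) is a stable translation quiver: τ^m is a bijection on the vertices, and for all vertices x and y, the number of sectional paths of length m from x to y in Γ equals the number of sectional paths of length m from τ^m(y) to x in Γ. -/

import Mathlib

/-!
Reversing a path and twisting it by powers of `τ`, `v k ↦ τ^(m-k) (v (m-k))`, maps the vertex
sequences of sectional paths from `x` to `y` bijectively onto those from `τ^m y` to `x`: the
sectional condition `τ (v (s+1)) ≠ v (s-1)` is carried to itself at index `m - s`, because `τ`
commutes with its powers. Iterating the mesh identity `#(a → b) = #(τ b → a)` gives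
`#(v s → v (s+1)) = #(τ^(s+1) (v (s+1)) → τ^s (v s))`, so corresponding sequences carry the same
number of arrow choices. Local finiteness passes to `Γ^m` because a path of length `m` from `x`
stays among the finitely many vertices reachable from `x` in at most `m` steps; finiteness of
predecessors then follows from that of successors through the counting identity.
-/

/-- A quiver (given by its arrow types `A x y`) is locally finite if each
vertex has only finitely many arrows between any pair of vertices and only
finitely many neighbours. -/
def QuiverLocFin {V : Type*} (A : V → V → Type*) : Prop :=
  (∀ x y, Finite (A x y)) ∧ (∀ x, {y | Nonempty (A x y)}.Finite) ∧
    (∀ y, {x | Nonempty (A x y)}.Finite)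

/-- A stable translation quiver: a locally finite quiver together with a
bijection `τ` on all vertices such that for all vertices `x, y` the number of
arrows from `x` to `y` equals the number of arrows from `τ y` to `x`. -/
def IsStableTranslationQuiver {V : Type*} (A : V → V → Type*) (τ : V → V) : Prop :=
  QuiverLocFin A ∧ Function.Bijective τ ∧
    ∀ x y, Nat.card (A x y) = Nat.card (A (τ y) x)

/-- The sectional condition on a sequence of vertices `v 0, v 1, …, v m`:
`τ (v (s+1)) ≠ v (s-1)` for all `0 < s < m`. -/
def SectCondT {V : Type*} (τ : V → V) (m : ℕ) (v : Fin (m+1) → V) : Prop :=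
  ∀ (s : ℕ) (_ : 1 ≤ s) (h2 : s + 1 ≤ m),
    τ (v ⟨s+1, by omega⟩) ≠ v ⟨s-1, by omega⟩

/-- The type of sectional paths of length `m` from `x` to `y`: a sequence of
vertices `v 0 = x, v 1, …, v m = y` satisfying the sectional condition,
together with a chosen arrow `v s → v (s+1)` for each `s`. -/
def SectPathT {V : Type*} (A : V → V → Type*) (τ : V → V) (m : ℕ)
    (x y : V) : Type _ :=
  Σ v : {v : Fin (m+1) → V // v 0 = x ∧ v (Fin.last m) = y ∧ SectCondT τ m v},
    ∀ s : Fin m, A (v.1 s.castSucc) (v.1 s.succ)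

theorem finite_sigma_of_finite_nonempty {α : Type*} {β : α → Type*} [∀ a, Finite (β a)]
    (h : {a | Nonempty (β a)}.Finite) : Finite (Σ a, β a) :=
  have := h.to_subtype
  Finite.of_surjective (fun p : Σ a : {a | Nonempty (β a)}, β a => ⟨p.1.1, p.2⟩)
    fun ⟨a, b⟩ => ⟨⟨⟨a, ⟨b⟩⟩, b⟩, rfl⟩

section

open Equiv

variable {V : Type*}

theorem IsStableTranslationQuiver.of_finite_succ {A : V → V → Type*} {τ : V → V}
    (hfin : ∀ x y, Finite (A x y)) (hsucc : ∀ x, {y | Nonempty (A x y)}.Finite)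
    (hτ : Function.Bijective τ) (hcard : ∀ x y, Nat.card (A x y) = Nat.card (A (τ y) x)) :
    IsStableTranslationQuiver A τ := by
  refine ⟨⟨hfin, hsucc, fun y => (hsucc (τ y)).subset fun x hx => ?_⟩, hτ, hcard⟩
  have := hfin x y
  have := hfin (τ y) x
  exact Finite.card_pos_iff.mp (hcard x y ▸ Finite.card_pos_iff.mpr hx)

/-- The ends of the paths of length `n` starting at `x`. -/
def reachIn (A : V → V → Type*) (n : ℕ) (x : V) : Set V :=
  (fun S => ⋃ z ∈ S, {y | Nonempty (A z y)})^[n] {x}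

theorem reachIn_finite {A : V → V → Type*} (hsucc : ∀ x, {y | Nonempty (A x y)}.Finite)
    (n : ℕ) (x : V) : (reachIn A n x).Finite := by
  induction n with
  | zero => exact Set.finite_singleton x
  | succ n ih =>
    rw [reachIn, Function.iterate_succ_apply']
    exact ih.biUnion fun z _ => hsucc z

theorem mem_reachIn {A : V → V → Type*} {m : ℕ} {v : Fin (m + 1) → V}
    (a : ∀ s : Fin m, Nonempty (A (v s.castSucc) (v s.succ))) (k : Fin (m + 1)) :
    v k ∈ reachIn A k (v 0) := by
  induction k using Fin.induction with
  | zero => exact Set.mem_singleton _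
  | succ s ih =>
    rw [Fin.val_succ, reachIn, Function.iterate_succ_apply']
    exact Set.mem_biUnion ih (a s)

theorem SectPathT.finite {A : V → V → Type*} (τ : V → V) (hfin : ∀ x y, Finite (A x y))
    (hsucc : ∀ x, {y | Nonempty (A x y)}.Finite) (m : ℕ) (x y : V) :
    Finite (SectPathT A τ m x y) := by
  have hreach : (⋃ k : Fin (m + 1), reachIn A k x).Finite :=
    Set.finite_iUnion fun k => reachIn_finite hsucc k x
  refine finite_sigma_of_finite_nonempty <|
    ((Set.Finite.pi fun _ => hreach).preimage Subtype.val_injective.injOn).subset ?_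
  rintro ⟨v, rfl, _⟩ ⟨a⟩
  exact fun k _ => Set.mem_iUnion.mpr ⟨k, mem_reachIn (fun s => ⟨a s⟩) k⟩

theorem SectPathT.setOf_nonempty_subset_reachIn (A : V → V → Type*) (τ : V → V) (m : ℕ)
    (x : V) : {y | Nonempty (SectPathT A τ m x y)} ⊆ reachIn A m x := by
  rintro y ⟨⟨v, rfl, rfl, _⟩, a⟩
  simpa using mem_reachIn (fun s => ⟨a s⟩) (Fin.last m)

def twistedReverse (σ : Perm V) (m : ℕ) : (Fin (m + 1) → V) ≃ (Fin (m + 1) → V) :=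
  (piCongrRight fun j : Fin (m + 1) => σ ^ (j : ℕ)).trans (arrowCongr Fin.revPerm (Equiv.refl V))

@[simp]
theorem twistedReverse_apply {σ : Perm V} {m : ℕ} (v : Fin (m + 1) → V) (k : Fin (m + 1)) :
    twistedReverse σ m v k = (σ ^ (k.rev : ℕ)) (v k.rev) :=
  rfl

theorem sectCondT_iff {τ : V → V} {m : ℕ} {v : Fin (m + 1) → V} :
    SectCondT τ m v ↔ ∀ i j : Fin (m + 1), (i : ℕ) + 2 = j → τ (v j) ≠ v i := by
  constructor
  · rintro h ⟨i, hi⟩ ⟨j, hj⟩ (rfl : i + 2 = j)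
    exact h (i + 1) (by omega) (by omega)
  · intro h s hs₁ hs₂
    exact h _ _ (by simp; omega)

theorem Equiv.Perm.apply_pow_ne_pow_add_two_iff (σ : Perm V) (n : ℕ) (a b : V) :
    σ ((σ ^ n) a) ≠ (σ ^ (n + 2)) b ↔ σ b ≠ a := by
  rw [← Perm.mul_apply, ← pow_succ', pow_succ _ (n + 1), Perm.mul_apply,
    (σ ^ (n + 1)).injective.ne_iff, ne_comm]

theorem sectCondT_twistedReverse {σ : Perm V} {m : ℕ} {v : Fin (m + 1) → V} :
    SectCondT σ m (twistedReverse σ m v) ↔ SectCondT σ m v := by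
  have hrev : ∀ i j : Fin (m + 1), (i : ℕ) + 2 = j → (i.rev : ℕ) = j.rev + 2 := by
    intro i j hij
    simp only [Fin.val_rev]
    omega
  simp only [sectCondT_iff, twistedReverse_apply]
  constructor
  · intro h i j hij
    have := h j.rev i.rev (by simp only [Fin.val_rev]; omega)
    rwa [hrev j.rev i.rev (by simp only [Fin.val_rev]; omega), σ.apply_pow_ne_pow_add_two_iff,
      Fin.rev_rev, Fin.rev_rev] at this
  · intro h i j hij
    rw [hrev i j hij, σ.apply_pow_ne_pow_add_two_iff]
    exact h j.rev i.rev (by simp only [Fin.val_rev]; omega)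

section Card

variable {A : V → V → Type*} {σ : Perm V}
  (hcard : ∀ x y, Nat.card (A x y) = Nat.card (A (σ y) x))
include hcard

theorem card_arrow_perm_apply (a b : V) : Nat.card (A (σ a) (σ b)) = Nat.card (A a b) := by
  rw [hcard a b, hcard (σ b) a]

theorem card_arrow_pow (n : ℕ) (a b : V) :
    Nat.card (A ((σ ^ n) a) ((σ ^ n) b)) = Nat.card (A a b) := by
  induction n with
  | zero => rfl
  | succ n ih => rw [pow_succ', Perm.mul_apply, Perm.mul_apply, card_arrow_perm_apply hcard, ih]

theorem card_arrow_pow_succ (n : ℕ) (a b : V) :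
    Nat.card (A ((σ ^ (n + 1)) b) ((σ ^ n) a)) = Nat.card (A a b) := by
  rw [pow_succ', Perm.mul_apply, ← hcard, card_arrow_pow hcard]

theorem card_arrows_twistedReverse {m : ℕ} (v : Fin (m + 1) → V) :
    Nat.card (∀ s : Fin m, A (twistedReverse σ m v s.castSucc) (twistedReverse σ m v s.succ)) =
      Nat.card (∀ s : Fin m, A (v s.castSucc) (v s.succ)) := by
  rw [Nat.card_pi, Nat.card_pi]
  refine Fintype.prod_equiv Fin.revPerm _ _ fun s => ?_
  simp only [twistedReverse_apply, Fin.rev_castSucc, Fin.rev_succ, Fin.revPerm_apply,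
    Fin.val_succ, Fin.val_castSucc]
  exact card_arrow_pow_succ hcard _ _ _

theorem SectPathT.card_reverse (hfin : ∀ x y, Finite (A x y)) (m : ℕ) (x y : V) :
    Nat.card (SectPathT A σ m x y) = Nat.card (SectPathT A σ m ((σ ^ m) y) x) := by
  refine Nat.card_congr <| sigmaCongr ((twistedReverse σ m).subtypeEquiv fun v => ?_) fun v =>
    Classical.choice <| Finite.card_eq.mp (card_arrows_twistedReverse hcard v.1).symm
  simp [sectCondT_twistedReverse, (σ ^ m).injective.eq_iff]
  tauto

end Card

end

theorem stmt10_general {V : Type*} (A : V → V → Type*) (τ : V → V)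
    (hST : IsStableTranslationQuiver A τ) (m : ℕ) :
    IsStableTranslationQuiver (fun x y => SectPathT A τ m x y) (τ^[m]) := by
  obtain ⟨⟨hfin, hsucc, -⟩, hτ, hcard⟩ := hST
  refine IsStableTranslationQuiver.of_finite_succ (SectPathT.finite τ hfin hsucc m)
    (fun x => (reachIn_finite hsucc m x).subset (SectPathT.setOf_nonempty_subset_reachIn A τ m x))
    (hτ.iterate m) fun x y => ?_
  simpa [Equiv.Perm.coe_pow] using
    SectPathT.card_reverse (σ := Equiv.ofBijective τ hτ) hcard hfin m x y

/-- Let `m ≥ 1` and let `(Γ,τ)` be a stable translation quiver.  Then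
`(Γ^m, τ^m)` — whose arrows from `x` to `y` are the sectional paths of length
`m` from `x` to `y` in `Γ`, and whose translation is the `m`-th iterate
`τ^[m]` — is again a stable translation quiver: `τ^[m]` is a bijection on the
vertices, and for all vertices `x, y` the number of sectional paths of length
`m` from `x` to `y` equals the number of sectional paths of length `m` from
`τ^[m] y` to `x`. -/
theorem stmt10 {V : Type*} (A : V → V → Type*) (τ : V → V)
    (hST : IsStableTranslationQuiver A τ) (m : ℕ) (hm : 1 ≤ m) :
    IsStableTranslationQuiver (fun x y => SectPathT A τ m x y) (τ^[m]) :=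
  stmt10_general A τ hST m
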